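/- Let (B,β) be a monoidal Hom-bialgebra and (H,α) a monoidal Hom-coalgebra that is a right (B,β)-Hom-comodule coalgebra with coaction ρ(h) = h_(0) ⊗ h_(1). Then B⊗H with comultiplication Δ(a⊗h) = Σ a₁ ⊗ α(h₁_(0)) ⊗ β⁻¹(a₂)h₁_(1) ⊗ h₂, counit ε(a⊗h) = ε_B(a)ε_H(h), and twisting map β⊗α is a monoidal Hom-coalgebra (the Hom-smash coproduct). -/
import Mathlib


open TensorProduct LinearMap

/-- A unital monoidal Hom-associative algebra. -/
structure HomAlg (k : Type*) [Field k] (A : Type*) [AddCommGroup A] [Module k A] where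
  au : A ≃ₗ[k] A
  mul : A →ₗ[k] A →ₗ[k] A
  one : A
  hom_assoc : ∀ x y z : A, mul (au x) (mul y z) = mul (mul x y) (au z)
  one_mul' : ∀ x : A, mul one x = au x
  mul_one' : ∀ x : A, mul x one = au x
  au_mul : ∀ x y : A, au (mul x y) = mul (au x) (au y)
  au_one : au one = one

/-- A counital monoidal Hom-coassociative coalgebra. -/
structure HomCoalg (k : Type*) [Field k] (C : Type*) [AddCommGroup C] [Module k C] where
  au : C ≃ₗ[k] C
  comul : C →ₗ[k] C ⊗[k] C
  counit : C →ₗ[k] k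
  hom_coassoc : (TensorProduct.map au.symm.toLinearMap comul) ∘ₗ comul
    = (TensorProduct.assoc k C C C).toLinearMap ∘ₗ (TensorProduct.map comul au.symm.toLinearMap) ∘ₗ comul
  counit_comul : ∀ c : C,
    (TensorProduct.lid k C) ((TensorProduct.map counit LinearMap.id) (comul c)) = au.symm c
  comul_counit : ∀ c : C,
    (TensorProduct.rid k C) ((TensorProduct.map LinearMap.id counit) (comul c)) = au.symm c
  comul_au : ∀ c : C, comul (au c) = (TensorProduct.map au.toLinearMap au.toLinearMap) (comul c)
  counit_au : ∀ c : C, counit (au c) = counit c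

/-- A monoidal Hom-bialgebra. -/
structure HomBialg (k : Type*) [Field k] (H : Type*) [AddCommGroup H] [Module k H]
    extends HomAlg k H, HomCoalg k H where
  comul_mul : ∀ x y : H, comul (mul x y)
    = (TensorProduct.map (TensorProduct.lift mul) (TensorProduct.lift mul))
        ((TensorProduct.tensorTensorTensorComm k H H H H) (comul x ⊗ₜ[k] comul y))
  comul_one : comul one = one ⊗ₜ[k] one
  counit_mul : ∀ x y : H, counit (mul x y) = counit x * counit y
  counit_one : counit one = 1

/-- A monoidal Hom-Hopf algebra. -/
structure HomHopf (k : Type*) [Field k] (H : Type*) [AddCommGroup H] [Module k H]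
    extends HomBialg k H where
  S : H →ₗ[k] H
  S_au : S ∘ₗ au.toLinearMap = au.toLinearMap ∘ₗ S
  S_mul_id : ∀ x : H,
    TensorProduct.lift mul ((TensorProduct.map S LinearMap.id) (comul x)) = counit x • one
  id_mul_S : ∀ x : H,
    TensorProduct.lift mul ((TensorProduct.map LinearMap.id S) (comul x)) = counit x • one

/-- The Hom-smash coproduct comultiplication on `B ⊗ H`:
`Δ(a # h) = Σ a₁ # α(h₁₍₀₎) ⊗ β⁻¹(a₂)·h₁₍₁₎ # h₂`. -/
noncomputable def smashComul {k : Type*} [Field k] {B H : Type*}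
    [AddCommGroup B] [Module k B] [AddCommGroup H] [Module k H]
    (βB : B ≃ₗ[k] B) (mulB : B →ₗ[k] B →ₗ[k] B) (comulB : B →ₗ[k] B ⊗[k] B)
    (αH : H ≃ₗ[k] H) (comulH : H →ₗ[k] H ⊗[k] H) (ρ : H →ₗ[k] H ⊗[k] B) :
    B ⊗[k] H →ₗ[k] (B ⊗[k] H) ⊗[k] (B ⊗[k] H) :=
  (TensorProduct.map
      (LinearMap.lTensor B αH.toLinearMap)
      ((LinearMap.rTensor H (TensorProduct.lift (mulB ∘ₗ βB.symm.toLinearMap)))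
        ∘ₗ (TensorProduct.assoc k B B H).symm.toLinearMap))
  ∘ₗ (TensorProduct.tensorTensorTensorComm k B B H (B ⊗[k] H)).toLinearMap
  ∘ₗ (LinearMap.lTensor (B ⊗[k] B)
        ((TensorProduct.assoc k H B H).toLinearMap ∘ₗ (LinearMap.rTensor H ρ)))
  ∘ₗ (TensorProduct.map comulB comulH)

/-- The Hom-smash counit `ε(a # h) = ε_B(a) ε_H(h)` on `B ⊗ H`. -/
noncomputable def smashCounit {k : Type*} [Field k] {B H : Type*}
    [AddCommGroup B] [Module k B] [AddCommGroup H] [Module k H]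
    (counitB : B →ₗ[k] k) (counitH : H →ₗ[k] k) : B ⊗[k] H →ₗ[k] k :=
  (LinearMap.mul' k k) ∘ₗ (TensorProduct.map counitB counitH)

namespace SmashAux
variable {k : Type*} [Field k] {B H : Type*} [AddCommGroup B] [Module k B] [AddCommGroup H] [Module k H]

noncomputable def psi (ΔH : H →ₗ[k] H ⊗[k] H) (ρ : H →ₗ[k] H ⊗[k] B) :
    H →ₗ[k] H ⊗[k] (B ⊗[k] H) :=
  (TensorProduct.assoc k H B H).toLinearMap ∘ₗ (LinearMap.rTensor H ρ) ∘ₗ ΔH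

noncomputable def Phi (β : B ≃ₗ[k] B) (α : H ≃ₗ[k] H) (m : B →ₗ[k] B →ₗ[k] B) :
    (B ⊗[k] B) ⊗[k] (H ⊗[k] (B ⊗[k] H)) →ₗ[k] (B ⊗[k] H) ⊗[k] (B ⊗[k] H) :=
  (TensorProduct.map
      (LinearMap.lTensor B α.toLinearMap)
      ((LinearMap.rTensor H (TensorProduct.lift (m ∘ₗ β.symm.toLinearMap)))
        ∘ₗ (TensorProduct.assoc k B B H).symm.toLinearMap))
  ∘ₗ (TensorProduct.tensorTensorTensorComm k B B H (B ⊗[k] H)).toLinearMap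

@[simp] lemma Phi_tmul (β : B ≃ₗ[k] B) (α : H ≃ₗ[k] H) (m : B →ₗ[k] B →ₗ[k] B)
    (x y : B) (u : H) (v : B) (w : H) :
    Phi β α m ((x ⊗ₜ y) ⊗ₜ (u ⊗ₜ (v ⊗ₜ w)))
      = (x ⊗ₜ α u) ⊗ₜ ((m (β.symm y) v) ⊗ₜ w) := by
  simp [Phi, tensorTensorTensorComm_tmul]

variable (β : B ≃ₗ[k] B) (m : B →ₗ[k] B →ₗ[k] B) (εB : B →ₗ[k] k)
variable (α : H ≃ₗ[k] H) (ΔH : H →ₗ[k] H ⊗[k] H) (εH : H →ₗ[k] k) (ρ : H →ₗ[k] H ⊗[k] B)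

/-- keyC2 : collapsing εH over the coaction -/
noncomputable def FF : B ⊗[k] (H ⊗[k] (B ⊗[k] H)) →ₗ[k] B ⊗[k] H :=
  (LinearMap.rTensor H (TensorProduct.lift (m ∘ₗ β.symm.toLinearMap)))
  ∘ₗ (TensorProduct.assoc k B B H).symm.toLinearMap
  ∘ₗ (LinearMap.lTensor B
        ((TensorProduct.lid k (B ⊗[k] H)).toLinearMap
          ∘ₗ (LinearMap.rTensor (B ⊗[k] H) (εH ∘ₗ α.toLinearMap))))

@[simp] lemma FF_tmul (b : B) (u : H) (v : B) (w : H) :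
    FF β m α εH (b ⊗ₜ (u ⊗ₜ (v ⊗ₜ w))) = εH (α u) • ((m (β.symm b) v) ⊗ₜ w) := by
  simp only [FF, coe_comp, LinearEquiv.coe_coe, Function.comp_apply, lTensor_tmul,
    rTensor_tmul, lid_tmul, TensorProduct.assoc_symm_tmul, TensorProduct.tmul_smul,
    TensorProduct.smul_tmul', map_smul, lift.tmul, coe_comp, Function.comp_apply,
    LinearMap.smul_apply]

lemma keyC2 (oneB : B)
    (hcc2 : ∀ x : H, (TensorProduct.lid k B) ((TensorProduct.map εH LinearMap.id) (ρ x)) = εH x • oneB)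
    (hmul_one : ∀ x : B, m x oneB = β x)
    (hεα : ∀ x : H, εH (α x) = εH x)
    (b : B) (h : H) :
    FF β m α εH (b ⊗ₜ psi ΔH ρ h)
      = b ⊗ₜ ((TensorProduct.lid k H) ((TensorProduct.map εH LinearMap.id) (ΔH h))) := by
  have inner : ∀ (y : H) (s : H ⊗[k] B),
      FF β m α εH (b ⊗ₜ ((TensorProduct.assoc k H B H) (s ⊗ₜ y)))
        = (m (β.symm b) ((TensorProduct.lid k B) ((TensorProduct.map εH LinearMap.id) s))) ⊗ₜ y := by
    intro y s
    induction s using TensorProduct.induction_on with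
    | zero => simp
    | tmul u v => simp [hεα, TensorProduct.smul_tmul']
    | add s t hs ht =>
        simp only [TensorProduct.add_tmul, map_add, TensorProduct.tmul_add] at *
        rw [hs, ht]
  simp only [psi, coe_comp, Function.comp_apply, LinearEquiv.coe_coe]
  induction (ΔH h) using TensorProduct.induction_on with
  | zero => simp
  | tmul x y =>
      simp only [rTensor_tmul]
      rw [inner y (ρ x), hcc2 x, map_smul, hmul_one, LinearEquiv.apply_symm_apply]
      simp [TensorProduct.smul_tmul, TensorProduct.tmul_smul]
  | add s t hs ht => simp only [map_add, TensorProduct.tmul_add] at *; rw [hs, ht]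



noncomputable def smashCounit' (εB : B →ₗ[k] k) (εH : H →ₗ[k] k) : B ⊗[k] H →ₗ[k] k :=
  (LinearMap.mul' k k) ∘ₗ (TensorProduct.map εB εH)

@[simp] lemma smashCounit'_tmul (a : B) (h : H) :
    smashCounit' εB εH (a ⊗ₜ h) = εB a * εH h := rfl


noncomputable def GG : B ⊗[k] (H ⊗[k] (B ⊗[k] H)) →ₗ[k] B ⊗[k] H :=
  LinearMap.lTensor B (α.toLinearMap ∘ₗ (TensorProduct.rid k H).toLinearMap
    ∘ₗ TensorProduct.map LinearMap.id (smashCounit' εB εH))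

@[simp] lemma GG_tmul (b : B) (u : H) (v : B) (w : H) :
    GG εB α εH (b ⊗ₜ (u ⊗ₜ (v ⊗ₜ w))) = (εB v * εH w) • (b ⊗ₜ α u) := by
  simp only [GG, lTensor_tmul, coe_comp, Function.comp_apply, map_tmul, id_coe, id_eq,
    smashCounit'_tmul, rid_tmul, map_smul, LinearEquiv.coe_coe, TensorProduct.tmul_smul]

lemma keyD1 (hεmul : ∀ x y : B, εB (m x y) = εB x * εB y) (hεβ : ∀ x : B, εB (β.symm x) = εB x) :
    (TensorProduct.rid k (B ⊗[k] H)).toLinearMap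
        ∘ₗ (TensorProduct.map LinearMap.id (smashCounit' εB εH))
        ∘ₗ Phi β α m
      = GG εB α εH ∘ₗ (LinearMap.rTensor (H ⊗[k] (B ⊗[k] H))
          ((TensorProduct.rid k B).toLinearMap ∘ₗ TensorProduct.map LinearMap.id εB)) := by
  ext x y u v w
  simp [hεmul, hεβ, TensorProduct.smul_tmul', smul_smul, mul_assoc]
  rw [show εB y * (εB v * εH w) = εB v * (εH w * εB y) by ring]

lemma keyD2
    (hρcounit : ∀ x : H,
      (TensorProduct.rid k H) ((TensorProduct.map LinearMap.id εB) (ρ x)) = α.symm x)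
    (b : B) (h : H) :
    GG εB α εH (b ⊗ₜ psi ΔH ρ h)
      = b ⊗ₜ ((TensorProduct.rid k H) ((TensorProduct.map LinearMap.id εH) (ΔH h))) := by
  have inner : ∀ (y : H) (s : H ⊗[k] B),
      GG εB α εH (b ⊗ₜ ((TensorProduct.assoc k H B H) (s ⊗ₜ y)))
        = εH y • (b ⊗ₜ α ((TensorProduct.rid k H) ((TensorProduct.map LinearMap.id εB) s))) := by
    intro y s
    induction s using TensorProduct.induction_on with
    | zero => simp
    | tmul u v =>
        simp [TensorProduct.smul_tmul', TensorProduct.tmul_smul, smul_smul, mul_comm,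
          mul_left_comm]
    | add s t hs ht =>
        simp only [TensorProduct.add_tmul, map_add, TensorProduct.tmul_add, smul_add] at *
        rw [hs, ht]
  simp only [psi, coe_comp, Function.comp_apply, LinearEquiv.coe_coe]
  induction (ΔH h) using TensorProduct.induction_on with
  | zero => simp
  | tmul x y =>
      simp only [rTensor_tmul]
      rw [inner y (ρ x), hρcounit x, LinearEquiv.apply_symm_apply]
      simp [TensorProduct.tmul_smul]
  | add s t hs ht => simp only [map_add, TensorProduct.tmul_add, smul_add] at *; rw [hs, ht]

lemma keyC1 :
    (TensorProduct.lid k (B ⊗[k] H)).toLinearMap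
        ∘ₗ (TensorProduct.map (smashCounit' εB εH) LinearMap.id)
        ∘ₗ Phi β α m
      = FF β m α εH ∘ₗ (LinearMap.rTensor (H ⊗[k] (B ⊗[k] H))
          ((TensorProduct.lid k B).toLinearMap ∘ₗ TensorProduct.map εB LinearMap.id)) := by
  ext x y u v w
  simp [TensorProduct.smul_tmul']
  rw [mul_comm, mul_smul]

lemma smashComul_eq (ΔB : B →ₗ[k] B ⊗[k] B) :
    smashComul β m ΔB α ΔH ρ = Phi β α m ∘ₗ TensorProduct.map ΔB (psi ΔH ρ) := by
  ext a h
  simp [smashComul, Phi, psi]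

lemma psiA
    (hρau : ∀ h : H, ρ (α h) = (TensorProduct.map α.toLinearMap β.toLinearMap) (ρ h))
    (hΔHα : ∀ h : H, ΔH (α h) = (TensorProduct.map α.toLinearMap α.toLinearMap) (ΔH h)) :
    psi ΔH ρ ∘ₗ α.toLinearMap
      = TensorProduct.map α.toLinearMap (TensorProduct.map β.toLinearMap α.toLinearMap)
          ∘ₗ psi ΔH ρ := by
  apply LinearMap.ext; intro h
  simp only [psi, coe_comp, Function.comp_apply, LinearEquiv.coe_coe]
  rw [hΔHα h]
  induction (ΔH h) using TensorProduct.induction_on with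
  | zero => simp
  | tmul x y =>
      simp only [map_tmul, rTensor_tmul, TensorProduct.assoc_tmul, LinearEquiv.coe_coe]
      rw [hρau x]
      induction (ρ x) using TensorProduct.induction_on with
      | zero => simp
      | tmul u v => simp
      | add s t hs ht => simp only [map_add, TensorProduct.add_tmul] at *; rw [hs, ht]
  | add s t hs ht => simp only [map_add] at *; rw [hs, ht]

lemma PhiA (hβm : ∀ x y : B, β (m x y) = m (β x) (β y)) :
    Phi β α m ∘ₗ TensorProduct.map (TensorProduct.map β.toLinearMap β.toLinearMap)
        (TensorProduct.map α.toLinearMap (TensorProduct.map β.toLinearMap α.toLinearMap))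
      = TensorProduct.map (TensorProduct.map β.toLinearMap α.toLinearMap)
          (TensorProduct.map β.toLinearMap α.toLinearMap) ∘ₗ Phi β α m := by
  ext x y u v w
  simp
  rw [hβm (β.symm y) v, LinearEquiv.apply_symm_apply]


-- ============ coassociativity machinery ============

/-- χ = (ρ ⊗ id) ∘ ρ -/
noncomputable def chi (ρ : H →ₗ[k] H ⊗[k] B) : H →ₗ[k] (H ⊗[k] B) ⊗[k] B :=
  LinearMap.rTensor B ρ ∘ₗ ρ

noncomputable def Xi (β : B ≃ₗ[k] B) (m : B →ₗ[k] B →ₗ[k] B) :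
    (B ⊗[k] B) ⊗[k] (B ⊗[k] B) →ₗ[k] B ⊗[k] B :=
  TensorProduct.map (TensorProduct.lift m) (TensorProduct.lift m)
    ∘ₗ (TensorProduct.tensorTensorTensorComm k B B B B).toLinearMap
    ∘ₗ LinearMap.rTensor (B ⊗[k] B) (TensorProduct.map β.symm.toLinearMap β.symm.toLinearMap)

@[simp] lemma Xi_tmul (β : B ≃ₗ[k] B) (m : B →ₗ[k] B →ₗ[k] B) (x y p q : B) :
    Xi β m ((x ⊗ₜ y) ⊗ₜ (p ⊗ₜ q)) = (m (β.symm x) p) ⊗ₜ (m (β.symm y) q) := by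
  simp [Xi, tensorTensorTensorComm_tmul]

noncomputable def Amap (β : B ≃ₗ[k] B) (α : H ≃ₗ[k] H) (m : B →ₗ[k] B →ₗ[k] B) :
    (B ⊗[k] (B ⊗[k] B)) ⊗[k] (H ⊗[k] ((B ⊗[k] B) ⊗[k] (H ⊗[k] (B ⊗[k] H))))
      →ₗ[k] (B ⊗[k] H) ⊗[k] ((B ⊗[k] H) ⊗[k] (B ⊗[k] H)) :=
  TensorProduct.map (TensorProduct.map β.symm.toLinearMap (LinearMap.id : H →ₗ[k] H))
      (Phi β α m ∘ₗ LinearMap.rTensor (H ⊗[k] (B ⊗[k] H)) (Xi β m)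
        ∘ₗ (TensorProduct.assoc k (B ⊗[k] B) (B ⊗[k] B) (H ⊗[k] (B ⊗[k] H))).symm.toLinearMap)
    ∘ₗ (TensorProduct.tensorTensorTensorComm k B (B ⊗[k] B) H
          ((B ⊗[k] B) ⊗[k] (H ⊗[k] (B ⊗[k] H)))).toLinearMap

noncomputable def Bmap (β : B ≃ₗ[k] B) (α : H ≃ₗ[k] H) (m : B →ₗ[k] B →ₗ[k] B) :
    ((B ⊗[k] B) ⊗[k] B) ⊗[k] ((H ⊗[k] (B ⊗[k] H)) ⊗[k] (B ⊗[k] H))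
      →ₗ[k] (B ⊗[k] H) ⊗[k] ((B ⊗[k] H) ⊗[k] (B ⊗[k] H)) :=
  (TensorProduct.assoc k (B ⊗[k] H) (B ⊗[k] H) (B ⊗[k] H)).toLinearMap
  ∘ₗ TensorProduct.map
      (Phi β α m ∘ₗ LinearMap.lTensor (B ⊗[k] B)
        (TensorProduct.map α.toLinearMap (TensorProduct.map β.toLinearMap α.toLinearMap)))
      ((TensorProduct.map
          (TensorProduct.lift m ∘ₗ TensorProduct.map (β.symm.toLinearMap ∘ₗ β.symm.toLinearMap)
            β.symm.toLinearMap) α.symm.toLinearMap)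
        ∘ₗ (TensorProduct.assoc k B B H).symm.toLinearMap)
  ∘ₗ (TensorProduct.tensorTensorTensorComm k (B ⊗[k] B) B (H ⊗[k] (B ⊗[k] H)) (B ⊗[k] H)).toLinearMap

noncomputable def Cmap (β : B ≃ₗ[k] B) (α : H ≃ₗ[k] H) :
    (H ⊗[k] B) ⊗[k] B →ₗ[k] H ⊗[k] (B ⊗[k] B) :=
  LinearMap.lTensor H (TensorProduct.map β.symm.toLinearMap β.symm.toLinearMap)
  ∘ₗ (TensorProduct.assoc k H B B).toLinearMap
  ∘ₗ LinearMap.rTensor B (TensorProduct.map α.toLinearMap β.toLinearMap)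

noncomputable def CB (β : B ≃ₗ[k] B) : B ⊗[k] (B ⊗[k] B) →ₗ[k] (B ⊗[k] B) ⊗[k] B :=
  LinearMap.lTensor (B ⊗[k] B) β.toLinearMap
  ∘ₗ (TensorProduct.assoc k B B B).symm.toLinearMap
  ∘ₗ LinearMap.rTensor (B ⊗[k] B) β.symm.toLinearMap

noncomputable def CHm (α : H ≃ₗ[k] H) : H ⊗[k] (H ⊗[k] H) →ₗ[k] (H ⊗[k] H) ⊗[k] H :=
  LinearMap.lTensor (H ⊗[k] H) α.toLinearMap
  ∘ₗ (TensorProduct.assoc k H H H).symm.toLinearMap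
  ∘ₗ LinearMap.rTensor (H ⊗[k] H) α.symm.toLinearMap

noncomputable def Theta (m : B →ₗ[k] B →ₗ[k] B) (ρ : H →ₗ[k] H ⊗[k] B) :
    H ⊗[k] H →ₗ[k] (H ⊗[k] H) ⊗[k] B :=
  LinearMap.lTensor (H ⊗[k] H) (TensorProduct.lift m)
  ∘ₗ (TensorProduct.tensorTensorTensorComm k H B H B).toLinearMap
  ∘ₗ TensorProduct.map ρ ρ

noncomputable def Wmap (ρ : H →ₗ[k] H ⊗[k] B) :
    ((H ⊗[k] H) ⊗[k] B) ⊗[k] H →ₗ[k] (H ⊗[k] (B ⊗[k] H)) ⊗[k] (B ⊗[k] H) :=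
  LinearMap.rTensor (B ⊗[k] H) ((TensorProduct.assoc k H B H).toLinearMap ∘ₗ LinearMap.rTensor H ρ)
  ∘ₗ (TensorProduct.assoc k (H ⊗[k] H) B H).toLinearMap

noncomputable def XL (β : B ≃ₗ[k] B) (α : H ≃ₗ[k] H) (ρ : H →ₗ[k] H ⊗[k] B) :
    H ⊗[k] (H ⊗[k] H) →ₗ[k] H ⊗[k] ((B ⊗[k] B) ⊗[k] (H ⊗[k] (B ⊗[k] H))) :=
  (TensorProduct.assoc k H (B ⊗[k] B) (H ⊗[k] (B ⊗[k] H))).toLinearMap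
  ∘ₗ TensorProduct.map (Cmap β α) (TensorProduct.assoc k H B H).toLinearMap
  ∘ₗ TensorProduct.map (chi ρ) (LinearMap.rTensor H ρ)

noncomputable def XR (m : B →ₗ[k] B →ₗ[k] B) (α : H ≃ₗ[k] H) (ρ : H →ₗ[k] H ⊗[k] B) :
    H ⊗[k] (H ⊗[k] H) →ₗ[k] (H ⊗[k] (B ⊗[k] H)) ⊗[k] (B ⊗[k] H) :=
  Wmap ρ ∘ₗ LinearMap.rTensor H (Theta m ρ) ∘ₗ CHm α

/-- general form of Hom-coassociativity rearrangement -/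
lemma Dre {M : Type*} [AddCommGroup M] [Module k M] (Δ : M →ₗ[k] M ⊗[k] M) (e : M ≃ₗ[k] M)
    (hco : TensorProduct.map e.symm.toLinearMap Δ ∘ₗ Δ
      = (TensorProduct.assoc k M M M).toLinearMap
          ∘ₗ TensorProduct.map Δ e.symm.toLinearMap ∘ₗ Δ) :
    LinearMap.rTensor M Δ ∘ₗ Δ
      = LinearMap.lTensor (M ⊗[k] M) e.toLinearMap
        ∘ₗ (TensorProduct.assoc k M M M).symm.toLinearMap
        ∘ₗ LinearMap.rTensor (M ⊗[k] M) e.symm.toLinearMap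
        ∘ₗ (LinearMap.lTensor M Δ ∘ₗ Δ) := by
  have hfold : LinearMap.lTensor (M ⊗[k] M) e.toLinearMap
      ∘ₗ TensorProduct.map Δ e.symm.toLinearMap = LinearMap.rTensor M Δ := by
    ext x y; simp
  apply LinearMap.ext; intro x
  have e1 : LinearMap.rTensor (M ⊗[k] M) e.symm.toLinearMap
        ((LinearMap.lTensor M Δ) (Δ x))
      = TensorProduct.map e.symm.toLinearMap Δ (Δ x) := by
    have h : LinearMap.rTensor (M ⊗[k] M) e.symm.toLinearMap ∘ₗ LinearMap.lTensor M Δ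
        = TensorProduct.map e.symm.toLinearMap Δ := by ext a b; simp
    exact DFunLike.congr_fun h (Δ x)
  have e2 := DFunLike.congr_fun hco x
  simp only [LinearMap.coe_comp, Function.comp_apply, LinearEquiv.coe_coe] at e1 e2 ⊢
  rw [e1, e2, LinearEquiv.symm_apply_apply]
  exact (DFunLike.congr_fun hfold (Δ x)).symm

lemma rho2eq (β : B ≃ₗ[k] B) (α : H ≃ₗ[k] H) (ΔB : B →ₗ[k] B ⊗[k] B) (ρ : H →ₗ[k] H ⊗[k] B)
    (hρco : TensorProduct.map α.symm.toLinearMap ΔB ∘ₗ ρ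
      = (TensorProduct.assoc k H B B).toLinearMap
          ∘ₗ TensorProduct.map ρ β.symm.toLinearMap ∘ₗ ρ) :
    LinearMap.lTensor H ΔB ∘ₗ ρ = Cmap β α ∘ₗ chi ρ := by
  have s1 : LinearMap.rTensor (B ⊗[k] B) α.toLinearMap
      ∘ₗ TensorProduct.map α.symm.toLinearMap ΔB = LinearMap.lTensor H ΔB := by
    ext x b; simp
  have s2 : LinearMap.rTensor (B ⊗[k] B) α.toLinearMap
        ∘ₗ (TensorProduct.assoc k H B B).toLinearMap
        ∘ₗ TensorProduct.map ρ β.symm.toLinearMap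
      = Cmap β α ∘ₗ LinearMap.rTensor B ρ := by
    ext x b
    simp only [LinearMap.coe_comp, Function.comp_apply, TensorProduct.map_tmul,
      LinearMap.rTensor_tmul, LinearEquiv.coe_coe,
      TensorProduct.AlgebraTensorModule.curry_apply, TensorProduct.curry_apply,
      LinearMap.coe_restrictScalars, Cmap]
    induction (ρ x) using TensorProduct.induction_on with
    | zero => simp
    | tmul p q => simp [Cmap]
    | add s t hs ht =>
        simp only [map_add, TensorProduct.add_tmul, LinearMap.map_add] at *
        rw [hs, ht]
  apply LinearMap.ext; intro h
  have e1 := DFunLike.congr_fun s1 (ρ h)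
  have e2 := DFunLike.congr_fun hρco h
  have e3 := DFunLike.congr_fun s2 (ρ h)
  simp only [LinearMap.coe_comp, Function.comp_apply, LinearEquiv.coe_coe] at e1 e2 e3 ⊢
  rw [← e1, e2, e3]
  rfl

lemma GL1 (ΔB : B →ₗ[k] B ⊗[k] B) (ΔH : H →ₗ[k] H ⊗[k] H) (ρ : H →ₗ[k] H ⊗[k] B) :
    LinearMap.lTensor H (TensorProduct.map ΔB (psi ΔH ρ))
        ∘ₗ (TensorProduct.assoc k H B H).toLinearMap ∘ₗ LinearMap.rTensor H ρ
      = (TensorProduct.assoc k H (B ⊗[k] B) (H ⊗[k] (B ⊗[k] H))).toLinearMap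
        ∘ₗ TensorProduct.map (LinearMap.lTensor H ΔB ∘ₗ ρ) (psi ΔH ρ) := by
  ext x y
  simp only [LinearMap.coe_comp, Function.comp_apply, TensorProduct.map_tmul,
    LinearMap.rTensor_tmul, LinearEquiv.coe_coe,
    TensorProduct.AlgebraTensorModule.curry_apply, TensorProduct.curry_apply,
    LinearMap.coe_restrictScalars]
  induction (ρ x) using TensorProduct.induction_on with
  | zero => simp
  | tmul p q => simp
  | add s t hs ht =>
      simp only [map_add, TensorProduct.add_tmul, LinearMap.map_add] at *
      rw [hs, ht]

lemma claimL2 (β : B ≃ₗ[k] B) (α : H ≃ₗ[k] H) (ΔH : H →ₗ[k] H ⊗[k] H) (ρ : H →ₗ[k] H ⊗[k] B) :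
    TensorProduct.map (Cmap β α ∘ₗ chi ρ) (psi ΔH ρ)
      = TensorProduct.map (Cmap β α) (TensorProduct.assoc k H B H).toLinearMap
        ∘ₗ TensorProduct.map (chi ρ) (LinearMap.rTensor H ρ)
        ∘ₗ LinearMap.lTensor H ΔH := by
  ext x y
  simp [psi]

lemma GRa (ΔH : H →ₗ[k] H ⊗[k] H) (ρ : H →ₗ[k] H ⊗[k] B) :
    LinearMap.rTensor (B ⊗[k] H) (psi ΔH ρ)
        ∘ₗ (TensorProduct.assoc k H B H).toLinearMap ∘ₗ LinearMap.rTensor H ρ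
      = Wmap ρ ∘ₗ LinearMap.rTensor H (TensorProduct.map ΔH LinearMap.id ∘ₗ ρ) := by
  ext x y
  simp only [LinearMap.coe_comp, Function.comp_apply, TensorProduct.map_tmul,
    LinearMap.rTensor_tmul, LinearEquiv.coe_coe,
    TensorProduct.AlgebraTensorModule.curry_apply, TensorProduct.curry_apply,
    LinearMap.coe_restrictScalars]
  induction (ρ x) using TensorProduct.induction_on with
  | zero => simp [Wmap]
  | tmul p q => simp [Wmap, psi]
  | add s t hs ht =>
      simp only [map_add, TensorProduct.add_tmul, LinearMap.map_add] at *
      rw [hs, ht]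


lemma claimA (β : B ≃ₗ[k] B) (m : B →ₗ[k] B →ₗ[k] B) (α : H ≃ₗ[k] H)
    (ΔB : B →ₗ[k] B ⊗[k] B) (ΔH : H →ₗ[k] H ⊗[k] H) (ρ : H →ₗ[k] H ⊗[k] B)
    (hΔBmul : ∀ x y : B, ΔB (m x y)
      = (TensorProduct.map (TensorProduct.lift m) (TensorProduct.lift m))
          ((TensorProduct.tensorTensorTensorComm k B B B B) (ΔB x ⊗ₜ[k] ΔB y)))
    (hΔBβinv : ∀ x : B, ΔB (β.symm x)
      = TensorProduct.map β.symm.toLinearMap β.symm.toLinearMap (ΔB x)) :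
    TensorProduct.map (TensorProduct.map β.symm.toLinearMap α.symm.toLinearMap)
        (Phi β α m ∘ₗ TensorProduct.map ΔB (psi ΔH ρ)) ∘ₗ Phi β α m
      = Amap β α m ∘ₗ TensorProduct.map (LinearMap.lTensor B ΔB)
          (LinearMap.lTensor H (TensorProduct.map ΔB (psi ΔH ρ))) := by
  ext x y u v w
  simp only [LinearMap.coe_comp, Function.comp_apply, TensorProduct.map_tmul,
    LinearMap.lTensor_tmul, LinearEquiv.coe_coe, Phi_tmul,
    TensorProduct.AlgebraTensorModule.curry_apply, TensorProduct.curry_apply,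
    LinearMap.coe_restrictScalars, LinearMap.id_coe, id_eq]
  rw [hΔBmul (β.symm y) v, hΔBβinv y, LinearEquiv.symm_apply_apply]
  simp [Amap, Xi, tensorTensorTensorComm_tmul]

lemma claimB (β : B ≃ₗ[k] B) (m : B →ₗ[k] B →ₗ[k] B) (α : H ≃ₗ[k] H)
    (ΔB : B →ₗ[k] B ⊗[k] B) (ΔH : H →ₗ[k] H ⊗[k] H) (ρ : H →ₗ[k] H ⊗[k] B)
    (hψα : ∀ u : H, psi ΔH ρ (α u)
      = TensorProduct.map α.toLinearMap (TensorProduct.map β.toLinearMap α.toLinearMap)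
          (psi ΔH ρ u))
    (hβinvmul : ∀ x y : B, β.symm (m x y) = m (β.symm x) (β.symm y)) :
    (TensorProduct.assoc k (B ⊗[k] H) (B ⊗[k] H) (B ⊗[k] H)).toLinearMap
        ∘ₗ TensorProduct.map (Phi β α m ∘ₗ TensorProduct.map ΔB (psi ΔH ρ))
            (TensorProduct.map β.symm.toLinearMap α.symm.toLinearMap)
        ∘ₗ Phi β α m
      = Bmap β α m ∘ₗ TensorProduct.map (LinearMap.rTensor B ΔB)
          (LinearMap.rTensor (B ⊗[k] H) (psi ΔH ρ)) := by
  ext x y u v w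
  simp only [LinearMap.coe_comp, Function.comp_apply, TensorProduct.map_tmul,
    LinearMap.rTensor_tmul, LinearEquiv.coe_coe, Phi_tmul,
    TensorProduct.AlgebraTensorModule.curry_apply, TensorProduct.curry_apply,
    LinearMap.coe_restrictScalars, LinearMap.id_coe, id_eq]
  rw [hψα u, hβinvmul (β.symm y) v]
  simp [Bmap, tensorTensorTensorComm_tmul]


set_option maxHeartbeats 1000000 in
lemma final (β : B ≃ₗ[k] B) (m : B →ₗ[k] B →ₗ[k] B) (α : H ≃ₗ[k] H) (ρ : H →ₗ[k] H ⊗[k] B)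
    (hρauinv : ∀ h : H, ρ (α.symm h)
      = TensorProduct.map α.symm.toLinearMap β.symm.toLinearMap (ρ h))
    (hβinvmul : ∀ x y : B, β.symm (m x y) = m (β.symm x) (β.symm y))
    (hassoc : ∀ x y z : B, m (β x) (m y z) = m (m x y) (β z)) :
    Amap β α m ∘ₗ TensorProduct.map LinearMap.id (XL β α ρ)
      = Bmap β α m ∘ₗ TensorProduct.map (CB β) (XR m α ρ) := by
  ext a b c x u v
  simp only [LinearMap.coe_comp, Function.comp_apply, TensorProduct.map_tmul,
    LinearMap.rTensor_tmul, LinearMap.lTensor_tmul, LinearEquiv.coe_coe,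
    TensorProduct.AlgebraTensorModule.curry_apply, TensorProduct.curry_apply,
    LinearMap.coe_restrictScalars, LinearMap.id_coe, id_eq,
    XL, XR, CB, CHm, Cmap, Theta, Wmap, chi,
    TensorProduct.assoc_tmul, TensorProduct.assoc_symm_tmul,
    TensorProduct.tensorTensorTensorComm_tmul]
  rw [hρauinv x]
  induction (ρ x) using TensorProduct.induction_on with
  | zero => simp
  | add s t hs ht =>
      simp only [map_add, LinearMap.map_add, TensorProduct.tmul_add,
        TensorProduct.add_tmul] at *
      rw [hs, ht]
  | tmul x0 x1 =>
    induction (ρ u) using TensorProduct.induction_on with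
    | zero => simp
    | add s t hs ht =>
        simp only [map_add, LinearMap.map_add, TensorProduct.tmul_add,
          TensorProduct.add_tmul] at *
        rw [hs, ht]
    | tmul u0 u1 =>
      simp only [TensorProduct.map_tmul, LinearMap.rTensor_tmul, LinearMap.lTensor_tmul,
        LinearEquiv.coe_coe, TensorProduct.assoc_tmul, TensorProduct.assoc_symm_tmul,
        TensorProduct.tensorTensorTensorComm_tmul, LinearMap.coe_comp, Function.comp_apply,
        TensorProduct.lift.tmul]
      rw [hρauinv x0]
      induction (ρ x0) using TensorProduct.induction_on with
      | zero => simp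
      | add s t hs ht =>
          simp only [map_add, LinearMap.map_add, TensorProduct.tmul_add,
            TensorProduct.add_tmul] at *
          rw [hs, ht]
      | tmul p q =>
        simp only [TensorProduct.map_tmul, LinearMap.rTensor_tmul, LinearMap.lTensor_tmul,
          LinearEquiv.coe_coe, TensorProduct.assoc_tmul, TensorProduct.assoc_symm_tmul,
          TensorProduct.tensorTensorTensorComm_tmul, LinearMap.coe_comp, Function.comp_apply,
          TensorProduct.lift.tmul, Amap, Bmap, Phi, Xi, LinearMap.id_coe, id_eq,
          LinearEquiv.apply_symm_apply, LinearEquiv.symm_apply_apply]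
        rw [hβinvmul (β.symm c) (β.symm x1), hβinvmul (β.symm x1) u1]
        rw [← LinearEquiv.apply_symm_apply β u1, ← hassoc]
        simp


set_option maxHeartbeats 1000000 in
lemma coassoc_main (β : B ≃ₗ[k] B) (m : B →ₗ[k] B →ₗ[k] B) (α : H ≃ₗ[k] H)
    (ΔB : B →ₗ[k] B ⊗[k] B) (ΔH : H →ₗ[k] H ⊗[k] H) (ρ : H →ₗ[k] H ⊗[k] B)
    (hBco : TensorProduct.map β.symm.toLinearMap ΔB ∘ₗ ΔB
      = (TensorProduct.assoc k B B B).toLinearMap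
          ∘ₗ TensorProduct.map ΔB β.symm.toLinearMap ∘ₗ ΔB)
    (hHco : TensorProduct.map α.symm.toLinearMap ΔH ∘ₗ ΔH
      = (TensorProduct.assoc k H H H).toLinearMap
          ∘ₗ TensorProduct.map ΔH α.symm.toLinearMap ∘ₗ ΔH)
    (hρco : TensorProduct.map α.symm.toLinearMap ΔB ∘ₗ ρ
      = (TensorProduct.assoc k H B B).toLinearMap
          ∘ₗ TensorProduct.map ρ β.symm.toLinearMap ∘ₗ ρ)
    (hcc1map : TensorProduct.map ΔH LinearMap.id ∘ₗ ρ
      = LinearMap.lTensor (H ⊗[k] H) (TensorProduct.lift m)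
          ∘ₗ (TensorProduct.tensorTensorTensorComm k H B H B).toLinearMap
          ∘ₗ TensorProduct.map ρ ρ ∘ₗ ΔH)
    (hρauinv : ∀ h : H, ρ (α.symm h)
      = TensorProduct.map α.symm.toLinearMap β.symm.toLinearMap (ρ h))
    (hψα : ∀ u : H, psi ΔH ρ (α u)
      = TensorProduct.map α.toLinearMap (TensorProduct.map β.toLinearMap α.toLinearMap)
          (psi ΔH ρ u))
    (hΔBmul : ∀ x y : B, ΔB (m x y)
      = (TensorProduct.map (TensorProduct.lift m) (TensorProduct.lift m))
          ((TensorProduct.tensorTensorTensorComm k B B B B) (ΔB x ⊗ₜ[k] ΔB y)))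
    (hΔBβinv : ∀ x : B, ΔB (β.symm x)
      = TensorProduct.map β.symm.toLinearMap β.symm.toLinearMap (ΔB x))
    (hβinvmul : ∀ x y : B, β.symm (m x y) = m (β.symm x) (β.symm y))
    (hassoc : ∀ x y z : B, m (β x) (m y z) = m (m x y) (β z)) :
    TensorProduct.map (TensorProduct.map β.symm.toLinearMap α.symm.toLinearMap)
        (Phi β α m ∘ₗ TensorProduct.map ΔB (psi ΔH ρ))
      ∘ₗ (Phi β α m ∘ₗ TensorProduct.map ΔB (psi ΔH ρ))
    = (TensorProduct.assoc k (B ⊗[k] H) (B ⊗[k] H) (B ⊗[k] H)).toLinearMap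
      ∘ₗ TensorProduct.map (Phi β α m ∘ₗ TensorProduct.map ΔB (psi ΔH ρ))
          (TensorProduct.map β.symm.toLinearMap α.symm.toLinearMap)
      ∘ₗ (Phi β α m ∘ₗ TensorProduct.map ΔB (psi ΔH ρ)) := by
  -- H-side left chain
  have hGL : ∀ h : H,
      LinearMap.lTensor H (TensorProduct.map ΔB (psi ΔH ρ)) (psi ΔH ρ h)
        = XL β α ρ ((LinearMap.lTensor H ΔH) (ΔH h)) := by
    intro h
    have e1 := DFunLike.congr_fun (GL1 ΔB ΔH ρ) (ΔH h)
    simp only [LinearMap.coe_comp, Function.comp_apply, LinearEquiv.coe_coe] at e1 ⊢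
    rw [show psi ΔH ρ h = (TensorProduct.assoc k H B H)
        ((LinearMap.rTensor H ρ) (ΔH h)) from rfl, e1,
      rho2eq β α ΔB ρ hρco]
    have e3 := DFunLike.congr_fun (claimL2 β α ΔH ρ) (ΔH h)
    simp only [LinearMap.coe_comp, Function.comp_apply, LinearEquiv.coe_coe] at e3
    rw [e3]
    rfl
  -- H-side right chain
  have hGR : ∀ h : H,
      LinearMap.rTensor (B ⊗[k] H) (psi ΔH ρ) (psi ΔH ρ h)
        = XR m α ρ ((LinearMap.lTensor H ΔH) (ΔH h)) := by
    intro h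
    have e1 := DFunLike.congr_fun (GRa ΔH ρ) (ΔH h)
    simp only [LinearMap.coe_comp, Function.comp_apply, LinearEquiv.coe_coe] at e1 ⊢
    rw [show psi ΔH ρ h = (TensorProduct.assoc k H B H)
        ((LinearMap.rTensor H ρ) (ΔH h)) from rfl, e1, hcc1map]
    have hCH := Dre ΔH α hHco
    have e2 := DFunLike.congr_fun hCH h
    simp only [LinearMap.coe_comp, Function.comp_apply, LinearEquiv.coe_coe,
      LinearMap.rTensor_comp] at e2 ⊢
    rw [e2]
    simp only [XR, Theta, Wmap, CHm, LinearMap.rTensor_comp, LinearMap.coe_comp,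
      Function.comp_apply, LinearEquiv.coe_coe]
  have hDB := Dre ΔB β hBco
  -- now prove the main equality pointwise on pure tensors
  ext a h
  have eA := DFunLike.congr_fun
    (claimA β m α ΔB ΔH ρ hΔBmul hΔBβinv) (ΔB a ⊗ₜ[k] psi ΔH ρ h)
  have eB := DFunLike.congr_fun
    (claimB β m α ΔB ΔH ρ hψα hβinvmul) (ΔB a ⊗ₜ[k] psi ΔH ρ h)
  have eF := DFunLike.congr_fun
    (final β m α ρ hρauinv hβinvmul hassoc)
    ((LinearMap.lTensor B ΔB ∘ₗ ΔB) a ⊗ₜ[k] (LinearMap.lTensor H ΔH ∘ₗ ΔH) h)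
  have eDB := DFunLike.congr_fun hDB a
  simp only [LinearMap.coe_comp, Function.comp_apply, TensorProduct.map_tmul,
    LinearEquiv.coe_coe, LinearMap.id_coe, id_eq,
    TensorProduct.AlgebraTensorModule.curry_apply, TensorProduct.curry_apply,
    LinearMap.coe_restrictScalars] at eA eB eF eDB ⊢
  rw [eA, hGL h, eF]
  have : (CB β) ((LinearMap.lTensor B ΔB) (ΔB a)) = (LinearMap.rTensor B ΔB) (ΔB a) := by
    rw [eDB]; rfl
  rw [this, ← hGR h, eB]

end SmashAux


/-- If `(B,β)` is a monoidal Hom-bialgebra and `(H,α)` a monoidal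
Hom-coalgebra which is a right `(B,β)`-Hom-comodule coalgebra via `ρ`, then `B ⊗ H`,
with the Hom-smash coproduct, the counit `ε_B ⊗ ε_H` and twisting map `β ⊗ α`,
is a monoidal Hom-coalgebra. -/
theorem smash_coproduct_is_homCoalgebra
    {k : Type*} [Field k] {B H : Type*}
    [AddCommGroup B] [Module k B] [AddCommGroup H] [Module k H]
    (Bb : HomBialg k B) (Hc : HomCoalg k H)
    (ρ : H →ₗ[k] H ⊗[k] B)
    -- `ρ` commutes with the twisting maps
    (hρau : ∀ h : H, ρ (Hc.au h)
      = (TensorProduct.map Hc.au.toLinearMap Bb.au.toLinearMap) (ρ h))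
    -- counit property of the coaction
    (hρcounit : ∀ h : H,
      (TensorProduct.rid k H) ((TensorProduct.map LinearMap.id Bb.counit) (ρ h)) = Hc.au.symm h)
    -- Hom-coassociativity of the coaction:  α⁻¹(h₍₀₎) ⊗ Δ_B(h₍₁₎) = ρ(h₍₀₎) ⊗ β⁻¹(h₍₁₎)
    (hρcoassoc : (TensorProduct.map Hc.au.symm.toLinearMap Bb.comul) ∘ₗ ρ
      = (TensorProduct.assoc k H B B).toLinearMap
          ∘ₗ (TensorProduct.map ρ Bb.au.symm.toLinearMap) ∘ₗ ρ)
    -- comodule coalgebra condition (1): Σ h₍₀₎₁ ⊗ h₍₀₎₂ ⊗ h₍₁₎ = Σ h₁₍₀₎ ⊗ h₂₍₀₎ ⊗ h₁₍₁₎h₂₍₁₎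
    (hcc1 : ∀ h : H,
      (TensorProduct.map Hc.comul LinearMap.id) (ρ h)
        = (LinearMap.lTensor (H ⊗[k] H) (TensorProduct.lift Bb.mul))
            ((TensorProduct.tensorTensorTensorComm k H B H B)
              ((TensorProduct.map ρ ρ) (Hc.comul h))))
    -- comodule coalgebra condition (2): Σ ε_H(h₍₀₎) h₍₁₎ = ε_H(h) 1_B
    (hcc2 : ∀ h : H,
      (TensorProduct.lid k B) ((TensorProduct.map Hc.counit LinearMap.id) (ρ h))
        = Hc.counit h • Bb.one) :
    ∃ hc : HomCoalg k (B ⊗[k] H),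
      hc.au = TensorProduct.congr Bb.au Hc.au
      ∧ hc.comul = smashComul Bb.au Bb.mul Bb.comul Hc.au Hc.comul ρ
      ∧ hc.counit = smashCounit Bb.counit Hc.counit := by
  classical
  have hsc : smashComul Bb.au Bb.mul Bb.comul Hc.au Hc.comul ρ
      = SmashAux.Phi Bb.au Hc.au Bb.mul
          ∘ₗ TensorProduct.map Bb.comul (SmashAux.psi Hc.comul ρ) :=
    SmashAux.smashComul_eq Bb.au Bb.mul Hc.au Hc.comul ρ Bb.comul
  have hεs : smashCounit Bb.counit Hc.counit = SmashAux.smashCounit' Bb.counit Hc.counit := rfl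
  have hεBβ : ∀ x : B, Bb.counit (Bb.au.symm x) = Bb.counit x := fun x => by
    conv_rhs => rw [← LinearEquiv.apply_symm_apply Bb.au x, Bb.counit_au]
  -- counit_comul
  have hcounit_comul : ∀ c : B ⊗[k] H,
      (TensorProduct.lid k (B ⊗[k] H))
        ((TensorProduct.map (smashCounit Bb.counit Hc.counit) LinearMap.id)
          ((smashComul Bb.au Bb.mul Bb.comul Hc.au Hc.comul ρ) c))
      = (TensorProduct.congr Bb.au Hc.au).symm c := by
    have hmap : (TensorProduct.lid k (B ⊗[k] H)).toLinearMap
        ∘ₗ (TensorProduct.map (smashCounit Bb.counit Hc.counit) LinearMap.id)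
        ∘ₗ (smashComul Bb.au Bb.mul Bb.comul Hc.au Hc.comul ρ)
        = TensorProduct.map Bb.au.symm.toLinearMap Hc.au.symm.toLinearMap := by
      rw [hsc, hεs]
      ext a h
      have e1 := DFunLike.congr_fun
        (SmashAux.keyC1 Bb.au Bb.mul Bb.counit Hc.au Hc.counit)
        (Bb.comul a ⊗ₜ[k] SmashAux.psi Hc.comul ρ h)
      simp only [LinearMap.coe_comp, Function.comp_apply, TensorProduct.map_tmul,
        LinearMap.rTensor_tmul, LinearEquiv.coe_coe, LinearMap.id_coe, id_eq,
        TensorProduct.AlgebraTensorModule.curry_apply, TensorProduct.curry_apply,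
        LinearMap.coe_restrictScalars] at e1 ⊢
      rw [e1, Bb.counit_comul a,
        SmashAux.keyC2 Bb.au Bb.mul Hc.au Hc.comul Hc.counit ρ Bb.one hcc2
          (fun x => Bb.mul_one' x) (fun x => Hc.counit_au x) _ h,
        Hc.counit_comul h]
    exact fun c => DFunLike.congr_fun hmap c
  -- comul_counit
  have hcomul_counit : ∀ c : B ⊗[k] H,
      (TensorProduct.rid k (B ⊗[k] H))
        ((TensorProduct.map LinearMap.id (smashCounit Bb.counit Hc.counit))
          ((smashComul Bb.au Bb.mul Bb.comul Hc.au Hc.comul ρ) c))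
      = (TensorProduct.congr Bb.au Hc.au).symm c := by
    have hmap : (TensorProduct.rid k (B ⊗[k] H)).toLinearMap
        ∘ₗ (TensorProduct.map LinearMap.id (smashCounit Bb.counit Hc.counit))
        ∘ₗ (smashComul Bb.au Bb.mul Bb.comul Hc.au Hc.comul ρ)
        = TensorProduct.map Bb.au.symm.toLinearMap Hc.au.symm.toLinearMap := by
      rw [hsc, hεs]
      ext a h
      have e1 := DFunLike.congr_fun (SmashAux.keyD1 Bb.au Bb.mul Bb.counit Hc.au Hc.counit
          (fun x y => Bb.counit_mul x y) hεBβ)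
        (Bb.comul a ⊗ₜ[k] SmashAux.psi Hc.comul ρ h)
      simp only [LinearMap.coe_comp, Function.comp_apply, TensorProduct.map_tmul,
        LinearMap.rTensor_tmul, LinearEquiv.coe_coe, LinearMap.id_coe, id_eq,
        TensorProduct.AlgebraTensorModule.curry_apply, TensorProduct.curry_apply,
        LinearMap.coe_restrictScalars] at e1 ⊢
      rw [e1, Bb.comul_counit a,
        SmashAux.keyD2 Bb.counit Hc.au Hc.comul Hc.counit ρ hρcounit _ h,
        Hc.comul_counit h]
    exact fun c => DFunLike.congr_fun hmap c
  -- comul_au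
  have hcomul_au : ∀ c : B ⊗[k] H,
      (smashComul Bb.au Bb.mul Bb.comul Hc.au Hc.comul ρ) ((TensorProduct.congr Bb.au Hc.au) c)
      = (TensorProduct.map (TensorProduct.congr Bb.au Hc.au).toLinearMap
          (TensorProduct.congr Bb.au Hc.au).toLinearMap)
          ((smashComul Bb.au Bb.mul Bb.comul Hc.au Hc.comul ρ) c) := by
    have hmap : (smashComul Bb.au Bb.mul Bb.comul Hc.au Hc.comul ρ)
          ∘ₗ TensorProduct.map Bb.au.toLinearMap Hc.au.toLinearMap
        = TensorProduct.map (TensorProduct.map Bb.au.toLinearMap Hc.au.toLinearMap)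
            (TensorProduct.map Bb.au.toLinearMap Hc.au.toLinearMap)
          ∘ₗ (smashComul Bb.au Bb.mul Bb.comul Hc.au Hc.comul ρ) := by
      rw [hsc]
      have hΔBβ : Bb.comul ∘ₗ Bb.au.toLinearMap
          = TensorProduct.map Bb.au.toLinearMap Bb.au.toLinearMap ∘ₗ Bb.comul :=
        LinearMap.ext fun a => Bb.comul_au a
      have hψα := SmashAux.psiA Bb.au Hc.au Hc.comul ρ hρau (fun h => Hc.comul_au h)
      rw [LinearMap.comp_assoc, ← TensorProduct.map_comp, hΔBβ, hψα,
        TensorProduct.map_comp, ← LinearMap.comp_assoc,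
        SmashAux.PhiA Bb.au Bb.mul Hc.au (fun x y => Bb.au_mul x y), LinearMap.comp_assoc]
    exact fun c => DFunLike.congr_fun hmap c
  -- counit_au
  have hcounit_au : ∀ c : B ⊗[k] H,
      (smashCounit Bb.counit Hc.counit) ((TensorProduct.congr Bb.au Hc.au) c)
      = (smashCounit Bb.counit Hc.counit) c := by
    have hmap : (smashCounit Bb.counit Hc.counit)
          ∘ₗ TensorProduct.map Bb.au.toLinearMap Hc.au.toLinearMap
        = smashCounit Bb.counit Hc.counit := by
      ext a h
      show Bb.counit (Bb.au a) * Hc.counit (Hc.au h) = Bb.counit a * Hc.counit h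
      rw [Bb.counit_au, Hc.counit_au]
    exact fun c => DFunLike.congr_fun hmap c
  refine ⟨{ au := TensorProduct.congr Bb.au Hc.au
            comul := smashComul Bb.au Bb.mul Bb.comul Hc.au Hc.comul ρ
            counit := smashCounit Bb.counit Hc.counit
            hom_coassoc := ?_
            counit_comul := hcounit_comul
            comul_counit := hcomul_counit
            comul_au := hcomul_au
            counit_au := hcounit_au }, rfl, rfl, rfl⟩
  have hρauinv : ∀ h : H, ρ (Hc.au.symm h)
      = TensorProduct.map Hc.au.symm.toLinearMap Bb.au.symm.toLinearMap (ρ h) := by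
    intro h
    have e := hρau (Hc.au.symm h)
    rw [LinearEquiv.apply_symm_apply] at e
    rw [e]
    induction (ρ (Hc.au.symm h)) using TensorProduct.induction_on with
    | zero => simp
    | tmul p q => simp
    | add s t hs ht => simp only [map_add] at *; rw [← hs, ← ht]
  have hΔBβinv : ∀ x : B, Bb.comul (Bb.au.symm x)
      = TensorProduct.map Bb.au.symm.toLinearMap Bb.au.symm.toLinearMap (Bb.comul x) := by
    intro x
    have e := Bb.comul_au (Bb.au.symm x)
    rw [LinearEquiv.apply_symm_apply] at e
    rw [e]
    induction (Bb.comul (Bb.au.symm x)) using TensorProduct.induction_on with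
    | zero => simp
    | tmul p q => simp
    | add s t hs ht => simp only [map_add] at *; rw [← hs, ← ht]
  have hβinvmul : ∀ x y : B, Bb.au.symm (Bb.mul x y)
      = Bb.mul (Bb.au.symm x) (Bb.au.symm y) := by
    intro x y
    have e := Bb.au_mul (Bb.au.symm x) (Bb.au.symm y)
    rw [LinearEquiv.apply_symm_apply, LinearEquiv.apply_symm_apply] at e
    rw [← e, LinearEquiv.symm_apply_apply]
  have hψα : ∀ u : H, SmashAux.psi Hc.comul ρ (Hc.au u)
      = TensorProduct.map Hc.au.toLinearMap
          (TensorProduct.map Bb.au.toLinearMap Hc.au.toLinearMap)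
          (SmashAux.psi Hc.comul ρ u) := fun u =>
    DFunLike.congr_fun
      (SmashAux.psiA Bb.au Hc.au Hc.comul ρ hρau (fun h => Hc.comul_au h)) u
  have hcongr : (TensorProduct.congr Bb.au Hc.au).symm.toLinearMap
      = TensorProduct.map Bb.au.symm.toLinearMap Hc.au.symm.toLinearMap := rfl
  show (TensorProduct.map (TensorProduct.congr Bb.au Hc.au).symm.toLinearMap
      (smashComul Bb.au Bb.mul Bb.comul Hc.au Hc.comul ρ))
      ∘ₗ (smashComul Bb.au Bb.mul Bb.comul Hc.au Hc.comul ρ)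
    = (TensorProduct.assoc k (B ⊗[k] H) (B ⊗[k] H) (B ⊗[k] H)).toLinearMap
      ∘ₗ (TensorProduct.map (smashComul Bb.au Bb.mul Bb.comul Hc.au Hc.comul ρ)
          (TensorProduct.congr Bb.au Hc.au).symm.toLinearMap)
      ∘ₗ (smashComul Bb.au Bb.mul Bb.comul Hc.au Hc.comul ρ)
  rw [hcongr, hsc]
  exact SmashAux.coassoc_main Bb.au Bb.mul Hc.au Bb.comul Hc.comul ρ
    Bb.hom_coassoc Hc.hom_coassoc hρcoassoc (LinearMap.ext hcc1) hρauinv hψα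
    (fun x y => Bb.comul_mul x y) hΔBβinv hβinvmul (fun x y z => Bb.hom_assoc x y z)
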